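/- arXiv:2009.05374 — 3 statements merged into one kernel-verified Lean document; each statement's English description precedes it below -/
import Mathlib

section
/- Let P be a connected pircon with rank function ρ, let w ∈ P, and let M and N be quasi special partial matchings of the finite poset P_{≤w}. Then every orbit O of the group of permutations of P_{≤w} generated by M and N has a minimum 0̂_O and a maximum 1̂_O and equals the interval [0̂_O, 1̂_O] of P_{≤w}. Moreover, exactly one of the following holds: (i) O is a chain, its minimum is fixed by M or by N, and its maximum is fixed by M or by N (O is chain-like); or (ii) no element of O is fixed by M or by N, any two elements of O of different rank are comparable, and O contains exactly two elements of each rank strictly between ρ(0̂_O) and ρ(1̂_O) (O is dihedral). -/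
/-!
Let `a` be a minimal element of the orbit, which is finite because it lies in `P_{≤w}`. Each of
`M`, `N` fixes `a` or moves it up along a cover. If one of them fixes `a`, the alternating walk
from `a` that starts with the other one climbs a chain until it hits a fixed point: a step down
off the chain would, by the lifting property, propagate down the chain to an element of the orbit
below `a`. If neither fixes `a`, the two alternating walks from `a` climb side by side like the
rails of a ladder (the lifting property makes each new element cover both elements of the level
below) until they meet, which they must in a finite poset. In both cases the walks exhaust the
orbit, and the orbit is the whole interval from `a` to its top `b`: if `z ∈ [a, b]` and `f b ⋖ b`,
then `z` or `f z` lies in `[a, f b]`, so induction on `b` applies.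
-/

/-- A quasi special partial matching of the order ideal `P_{≤w}`. -/
def IsQSPMOn {P : Type*} [PartialOrder P] (w : P) (M : P → P) : Prop :=
  (∀ u : P, u ≤ w → M u ≤ w) ∧
  (∀ u : P, u ≤ w → M (M u) = u) ∧
  (∀ u : P, u ≤ w → M u ⋖ u ∨ M u = u ∨ u ⋖ M u) ∧
  ∀ u t : P, u ≤ w → t ≤ w → u ⋖ t → M u ≠ t → M u < M t

/-- A special partial matching of the order ideal `P_{≤w}` (whose maximum is `w`). -/
def IsSPMOn {P : Type*} [PartialOrder P] (w : P) (M : P → P) : Prop :=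
  IsQSPMOn w M ∧ M w ⋖ w

/-- A pircon: for every non-minimal `x`, the order ideal `P_{≤x}` is finite and admits
a special partial matching. -/
def IsPircon (P : Type*) [PartialOrder P] : Prop :=
  ∀ x : P, ¬ IsMin x → (Set.Iic x).Finite ∧ ∃ M : P → P, IsSPMOn x M

/-- The equivalence relation generated by two matchings: `v` is reachable from `u`
by applying `M` and `N`; its classes are the orbits of the group `⟨M,N⟩`. -/
def orbRel {P : Type*} (M N : P → P) : P → P → Prop :=
  Relation.ReflTransGen fun a b => M a = b ∨ N a = b

/-- The orbit of `u` under the group generated by `M` and `N`. -/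
def orb {P : Type*} (M N : P → P) (u : P) : Set P := {v | orbRel M N u v}

open Set

section Grading

variable {P : Type*} [PartialOrder P] {ρ : P → ℕ} {w x y : P}

theorem exists_le_covBy_of_lt_of_finite (hfin : (Iic w).Finite) (hy : y ≤ w) (hxy : x < y) :
    ∃ z, x ≤ z ∧ z ⋖ y := by
  have hIco : (Ico x y).Finite := hfin.subset fun z hz => hz.2.le.trans hy
  obtain ⟨z, hz⟩ := hIco.exists_maximal ⟨x, left_mem_Ico.2 hxy⟩
  exact ⟨z, hz.prop.1, hz.prop.2, fun c hzc hcy =>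
    hzc.not_ge (hz.le_of_ge ⟨hz.prop.1.trans hzc.le, hcy⟩ hzc.le)⟩

theorem rank_lt_of_lt (hρ : ∀ a b : P, a ⋖ b → ρ b = ρ a + 1) (hfin : (Iic w).Finite)
    (hy : y ≤ w) (hxy : x < y) : ρ x < ρ y := by
  revert hxy
  refine (hfin.wellFoundedOn (r := (· < ·))).induction (P := fun y => x < y → ρ x < ρ y) hy ?_
  intro y hy ih hxy
  obtain ⟨z, hxz, hzy⟩ := exists_le_covBy_of_lt_of_finite hfin hy hxy
  rw [hρ z y hzy, Nat.lt_succ_iff]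
  rcases hxz.eq_or_lt with rfl | hxz
  · exact le_rfl
  · exact (ih z (hzy.le.trans hy) hzy.lt hxz).le

theorem covBy_of_lt_of_rank_eq (hρ : ∀ a b : P, a ⋖ b → ρ b = ρ a + 1)
    (hfin : (Iic w).Finite) (hy : y ≤ w) (hxy : x < y) (hr : ρ y = ρ x + 1) : x ⋖ y := by
  refine ⟨hxy, fun c hxc hcy => ?_⟩
  have := rank_lt_of_lt hρ hfin (hcy.le.trans hy) hxc
  have := rank_lt_of_lt hρ hfin hy hcy
  omega

theorem exists_not_covBy_succ (hfin : (Iic w).Finite) {s : ℕ → P} (hs : ∀ n, s n ≤ w) :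
    ∃ n, ¬ s n ⋖ s (n + 1) := by
  by_contra! h
  have hmono : StrictMono s := strictMono_nat_of_lt_succ fun n => (h n).lt
  exact infinite_range_of_injective hmono.injective (hfin.subset (range_subset_iff.2 hs))

end Grading

theorem IsPircon.finite_Iic {P : Type*} [PartialOrder P] (hP : IsPircon P) (w : P) :
    (Iic w).Finite := by
  by_cases hw : IsMin w
  · exact (finite_singleton w).subset fun y hy => le_antisymm hy (hw hy)
  · exact (hP w hw).1

namespace IsQSPMOn

variable {P : Type*} [PartialOrder P] {ρ : P → ℕ} {w u t v x : P} {f : P → P}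

theorem apply_le (hf : IsQSPMOn w f) (hu : u ≤ w) : f u ≤ w := hf.1 u hu

theorem apply_apply (hf : IsQSPMOn w f) (hu : u ≤ w) : f (f u) = u := hf.2.1 u hu

theorem covBy_trichotomy (hf : IsQSPMOn w f) (hu : u ≤ w) : f u ⋖ u ∨ f u = u ∨ u ⋖ f u :=
  hf.2.2.1 u hu

theorem apply_lt_apply (hf : IsQSPMOn w f) (hu : u ≤ w) (ht : t ≤ w) (hut : u ⋖ t)
    (hne : f u ≠ t) : f u < f t :=
  hf.2.2.2 u t hu ht hut hne

theorem apply_eq_iff (hf : IsQSPMOn w f) (hu : u ≤ w) (ht : t ≤ w) : f u = t ↔ u = f t :=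
  ⟨fun h => by rw [← h, hf.apply_apply hu], fun h => by rw [h, hf.apply_apply ht]⟩

theorem apply_eq_self_or_covBy (hf : IsQSPMOn w f) (hu : u ≤ w) (h : ¬ f u < u) :
    f u = u ∨ u ⋖ f u :=
  (hf.covBy_trichotomy hu).resolve_left fun h' => h h'.lt

/-- The lifting property, with both of its usual halves in one statement: take `x = u` when
`u ≤ f u`, and `x = f u` when `f u ⋖ u`. -/
theorem le_apply_of_le (hf : IsQSPMOn w f) (hfin : (Iic w).Finite) (hv : v ≤ w)
    (hfv : f v ⋖ v) (hxu : x ≤ u) (hxfu : x ≤ f u) (huv : u ≤ v) : x ≤ f v := by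
  revert hfv huv
  refine (hfin.wellFoundedOn (r := (· < ·))).induction
    (P := fun v => f v ⋖ v → u ≤ v → x ≤ f v) hv ?_
  intro v hv ih hfv huv
  rcases huv.eq_or_lt with rfl | huv
  · exact hxfu
  obtain ⟨c, huc, hcv⟩ := exists_le_covBy_of_lt_of_finite hfin hv huv
  have hc : c ≤ w := hcv.le.trans hv
  by_cases hfc : f c = v
  · rw [← (hf.apply_eq_iff hc hv).1 hfc]
    exact hxu.trans huc
  have hlt : f c < f v := hf.apply_lt_apply hc hv hcv hfc
  rcases hf.covBy_trichotomy hc with hfc' | hfc' | hfc'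
  · exact (ih c hc hcv.lt hfc' huc).trans hlt.le
  · exact hxu.trans (huc.trans (hfc'.ge.trans hlt.le))
  · exact hxu.trans (huc.trans (hfc'.le.trans hlt.le))

theorem mem_Icc_or_apply_mem_Icc (hf : IsQSPMOn w f) (hfin : (Iic w).Finite) {a b z : P}
    (hb : b ≤ w) (hfb : f b ⋖ b) (hfa : a ≤ f a) (hz : z ∈ Icc a b) :
    z ∈ Icc a (f b) ∨ f z ∈ Icc a (f b) := by
  have hzw : z ≤ w := hz.2.trans hb
  rcases hf.covBy_trichotomy hzw with hfz | hfz
  · exact .inr ⟨hf.le_apply_of_le hfin hzw hfz le_rfl hfa hz.1,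
      hf.le_apply_of_le hfin hb hfb hfz.le le_rfl hz.2⟩
  · have hzfz : z ≤ f z := hfz.elim ge_of_eq CovBy.le
    exact .inl ⟨hz.1, hf.le_apply_of_le hfin hb hfb le_rfl hzfz hz.2⟩

theorem apply_covBy_of_covBy (hf : IsQSPMOn w f) (hρ : ∀ a b : P, a ⋖ b → ρ b = ρ a + 1)
    (hfin : (Iic w).Finite) (ht : t ≤ w) (hft : f t ⋖ t) (hut : u ⋖ t) (hne : u ≠ f t) :
    f u ⋖ u ∧ f u ⋖ f t := by
  have hu : u ≤ w := hut.le.trans ht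
  have hlt : f u < f t := hf.apply_lt_apply hu ht hut fun h => hne ((hf.apply_eq_iff hu ht).1 h)
  have r1 := hρ _ _ hft
  have r2 := hρ _ _ hut
  have r3 := rank_lt_of_lt hρ hfin (hf.apply_le ht) hlt
  rcases hf.covBy_trichotomy hu with h | h | h
  · have r4 := hρ _ _ h
    exact ⟨h, covBy_of_lt_of_rank_eq hρ hfin (hf.apply_le ht) hlt (by omega)⟩
  · rw [h] at r3; omega
  · have r4 := hρ _ _ h; omega

theorem covBy_apply_of_covBy (hf : IsQSPMOn w f) (hρ : ∀ a b : P, a ⋖ b → ρ b = ρ a + 1)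
    (hfin : (Iic w).Finite) (ht : t ≤ w) (hufu : u ⋖ f u) (hut : u ⋖ t) (hne : t ≠ f u) :
    t ⋖ f t ∧ f u ⋖ f t := by
  have hu : u ≤ w := hut.le.trans ht
  have hlt : f u < f t := hf.apply_lt_apply hu ht hut hne.symm
  have r1 := hρ _ _ hufu
  have r2 := hρ _ _ hut
  have r3 := rank_lt_of_lt hρ hfin (hf.apply_le ht) hlt
  rcases hf.covBy_trichotomy ht with h | h | h
  · have r4 := hρ _ _ h; omega
  · rw [h] at r3; omega
  · have r4 := hρ _ _ h
    exact ⟨h, covBy_of_lt_of_rank_eq hρ hfin (hf.apply_le ht) hlt (by omega)⟩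

end IsQSPMOn

section Orbit

variable {P : Type*} {M N : P → P} {u t v : P}

theorem mem_orb_self : u ∈ orb M N u := Relation.ReflTransGen.refl

theorem apply_left_mem_orb (ht : t ∈ orb M N u) : M t ∈ orb M N u := ht.tail (.inl rfl)

theorem apply_right_mem_orb (ht : t ∈ orb M N u) : N t ∈ orb M N u := ht.tail (.inr rfl)

theorem orb_comm : orb N M u = orb M N u := by
  ext v
  constructor <;> exact Relation.ReflTransGen.mono (fun _ _ => Or.symm) _ _

theorem orb_subset_of_forall {S : Set P} (hu : u ∈ S) (hS : ∀ t ∈ S, M t ∈ S ∧ N t ∈ S) :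
    orb M N u ⊆ S := by
  intro v hv
  induction hv with
  | refl => exact hu
  | tail _ step ih => rcases step with rfl | rfl; exacts [(hS _ ih).1, (hS _ ih).2]

theorem orb_subset_orb (ht : t ∈ orb M N u) : orb M N t ⊆ orb M N u := fun _ hv => ht.trans hv

variable [PartialOrder P] {w : P}

theorem orb_subset_Iic (hM : IsQSPMOn w M) (hN : IsQSPMOn w N) (hu : u ≤ w) :
    orb M N u ⊆ Iic w :=
  orb_subset_of_forall hu fun _ ht => ⟨hM.apply_le ht, hN.apply_le ht⟩

theorem orb_eq_of_mem (hM : IsQSPMOn w M) (hN : IsQSPMOn w N) (hu : u ≤ w)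
    (ht : t ∈ orb M N u) : orb M N t = orb M N u := by
  refine (orb_subset_orb ht).antisymm (orb_subset_orb ?_)
  refine (orb_subset_of_forall (S := {v | v ≤ w ∧ u ∈ orb M N v}) ⟨hu, mem_orb_self⟩ ?_ ht).2
  rintro v ⟨hv, huv⟩
  refine ⟨⟨hM.apply_le hv, orb_subset_orb ?_ huv⟩, ⟨hN.apply_le hv, orb_subset_orb ?_ huv⟩⟩
  · have h : M (M v) ∈ orb M N (M v) := apply_left_mem_orb mem_orb_self
    rwa [hM.apply_apply hv] at h
  · have h : N (N v) ∈ orb M N (N v) := apply_right_mem_orb mem_orb_self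
    rwa [hN.apply_apply hv] at h

theorem Icc_subset_orb (hfin : (Iic w).Finite) (hM : IsQSPMOn w M) (hN : IsQSPMOn w N)
    {a b : P} (ha : a ≤ w) (hMa : a ≤ M a) (hNa : a ≤ N a)
    (hdown : ∀ t ∈ orb M N a, a < t → M t ⋖ t ∨ N t ⋖ t) (hb : b ∈ orb M N a) :
    Icc a b ⊆ orb M N a := by
  refine (hfin.wellFoundedOn (r := (· < ·))).induction
    (P := fun b => b ∈ orb M N a → Icc a b ⊆ orb M N a) (orb_subset_Iic hM hN ha hb) ?_ hb
  intro b hbw ih hb z hz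
  rcases hz.2.eq_or_lt with rfl | hzb
  · exact hb
  have step : ∀ f, IsQSPMOn w f → a ≤ f a → (∀ t ∈ orb M N a, f t ∈ orb M N a) →
      f b ⋖ b → z ∈ orb M N a := by
    intro f hf hfa hfO hfb
    have ih' := ih (f b) (hf.apply_le hbw) hfb.lt (hfO b hb)
    rcases hf.mem_Icc_or_apply_mem_Icc hfin hbw hfb hfa hz with h | h
    · exact ih' h
    · simpa only [hf.apply_apply (hz.2.trans hbw)] using hfO _ (ih' h)
  rcases hdown b hb (hz.1.trans_lt hzb) with h | h
  · exact step M hM hMa (fun _ => apply_left_mem_orb) h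
  · exact step N hN hNa (fun _ => apply_right_mem_orb) h

end Orbit

section AltWalk

variable {α : Type*} (M N : α → α)

def altMatching (n : ℕ) : α → α := if Even n then M else N

def altWalk (a : α) : ℕ → α
  | 0 => a
  | n + 1 => altMatching M N n (altWalk a n)

variable {M N} {a t u : α} {n : ℕ}

@[simp] theorem altMatching_zero : altMatching M N 0 = M := if_pos Even.zero

theorem altMatching_succ : altMatching M N (n + 1) = altMatching N M n := by
  by_cases h : Even n <;> simp [altMatching, h, Nat.even_add_one]

theorem altMatching_eq_or : altMatching M N n = M ∨ altMatching M N n = N := by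
  unfold altMatching; split <;> simp

theorem and_altMatching_iff (p : (α → α) → Prop) :
    p (altMatching M N n) ∧ p (altMatching N M n) ↔ p M ∧ p N := by
  by_cases h : Even n <;> simp [altMatching, h, and_comm]

theorem altMatching_mem_orb (ht : t ∈ orb M N u) : altMatching M N n t ∈ orb M N u := by
  rcases altMatching_eq_or (M := M) (N := N) (n := n) with h | h <;> rw [h]
  exacts [apply_left_mem_orb ht, apply_right_mem_orb ht]

theorem altWalk_mem_orb : altWalk M N a n ∈ orb M N a := by
  induction n with
  | zero => exact mem_orb_self
  | succ n ih => exact altMatching_mem_orb ih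

theorem altWalk_swap_mem_orb : altWalk N M a n ∈ orb M N a := orb_comm ▸ altWalk_mem_orb

theorem covBy_or_of_altMatching_covBy [Preorder α] (h : altMatching M N n t ⋖ t) :
    M t ⋖ t ∨ N t ⋖ t := by
  rcases altMatching_eq_or (M := M) (N := N) (n := n) with h' | h' <;> rw [h'] at h
  exacts [.inl h, .inr h]

variable [PartialOrder α] {w : α}

theorem altMatching_isQSPMOn (hM : IsQSPMOn w M) (hN : IsQSPMOn w N) :
    IsQSPMOn w (altMatching M N n) := by
  rcases altMatching_eq_or (M := M) (N := N) (n := n) with h | h <;> rw [h]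
  exacts [hM, hN]

theorem altWalk_le (hM : IsQSPMOn w M) (hN : IsQSPMOn w N) (ha : a ≤ w) :
    altWalk M N a n ≤ w := by
  induction n with
  | zero => exact ha
  | succ n ih => exact (altMatching_isQSPMOn hM hN).apply_le ih

theorem altMatching_altWalk_succ (hM : IsQSPMOn w M) (hN : IsQSPMOn w N) (ha : a ≤ w) :
    altMatching M N n (altWalk M N a (n + 1)) = altWalk M N a n :=
  (altMatching_isQSPMOn hM hN).apply_apply (altWalk_le hM hN ha)

theorem altMatching_swap_altWalk_succ (hM : IsQSPMOn w M) (hN : IsQSPMOn w N) (ha : a ≤ w) :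
    altMatching N M (n + 1) (altWalk M N a (n + 1)) = altWalk M N a n := by
  rw [altMatching_succ, altMatching_altWalk_succ hM hN ha]

end AltWalk

section ChainLike

variable {P : Type*} [PartialOrder P] {ρ : P → ℕ} {w a : P} {M N : P → P} {k : ℕ}

theorem altMatching_succ_altWalk_le (hM : IsQSPMOn w M) (hN : IsQSPMOn w N) (ha : a ≤ w)
    (hNa : N a = a) (hk : ∀ i < k, altWalk M N a i ⋖ altWalk M N a (i + 1)) {i : ℕ}
    (hi : i ≤ k) : altMatching M N (i + 1) (altWalk M N a i) ≤ altWalk M N a i := by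
  cases i with
  | zero => simp [altMatching_succ, altWalk, hNa]
  | succ i =>
    rw [altMatching_succ, altMatching_swap_altWalk_succ hM hN ha]
    exact (hk i hi).le

theorem exists_eq_altWalk_of_covBy (hρ : ∀ a b : P, a ⋖ b → ρ b = ρ a + 1)
    (hfin : (Iic w).Finite) (hM : IsQSPMOn w M) (hN : IsQSPMOn w N) (ha : a ≤ w)
    (hmin : ∀ t ∈ orb M N a, ¬ t < a) (hNa : N a = a)
    (hk : ∀ i < k, altWalk M N a i ⋖ altWalk M N a (i + 1)) :
    ∀ j ≤ k, ∀ z ∈ orb M N a, z ⋖ altWalk M N a j → ∃ i, j = i + 1 ∧ z = altWalk M N a i := by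
  intro j
  induction j with
  | zero => exact fun _ z hz hza => absurd hza.lt (hmin z hz)
  | succ j ih =>
    intro hj z hz hzc
    refine ⟨j, rfl, by_contra fun hne => ?_⟩
    have hf : IsQSPMOn w (altMatching M N j) := altMatching_isQSPMOn hM hN
    have hft := altMatching_altWalk_succ hM hN ha (n := j)
    obtain ⟨-, hfz⟩ := hf.apply_covBy_of_covBy hρ hfin (altWalk_le hM hN ha) (hft ▸ hk j hj)
      hzc (hft ▸ hne)
    rw [hft] at hfz
    obtain ⟨i, rfl, hfzi⟩ := ih (by omega) _ (altMatching_mem_orb hz) hfz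
    have hzi : z ≤ altWalk M N a i := by
      rw [(hf.apply_eq_iff (hzc.le.trans (altWalk_le hM hN ha)) (altWalk_le hM hN ha)).1 hfzi]
      exact altMatching_succ_altWalk_le hM hN ha hNa hk (by omega)
    exact hzc.2 (hzi.trans_lt (hk i (by omega)).lt) (hk (i + 1) hj).lt

theorem altMatching_altWalk_eq_self (hρ : ∀ a b : P, a ⋖ b → ρ b = ρ a + 1)
    (hfin : (Iic w).Finite) (hM : IsQSPMOn w M) (hN : IsQSPMOn w N) (ha : a ≤ w)
    (hmin : ∀ t ∈ orb M N a, ¬ t < a) (hNa : N a = a)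
    (hk : ∀ i < k, altWalk M N a i ⋖ altWalk M N a (i + 1))
    (hstop : ¬ altWalk M N a k ⋖ altWalk M N a (k + 1)) :
    altMatching M N k (altWalk M N a k) = altWalk M N a k := by
  have hf : IsQSPMOn w (altMatching M N k) := altMatching_isQSPMOn hM hN
  have hck : altWalk M N a k ≤ w := altWalk_le hM hN ha
  rcases hf.covBy_trichotomy hck with h | h | h
  · obtain ⟨i, rfl, hi⟩ := exists_eq_altWalk_of_covBy hρ hfin hM hN ha hmin hNa hk k le_rfl _
      (altMatching_mem_orb altWalk_mem_orb) h
    have hle : altWalk M N a (i + 1) ≤ altWalk M N a i := by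
      rw [(hf.apply_eq_iff hck (altWalk_le hM hN ha)).1 hi]
      exact altMatching_succ_altWalk_le hM hN ha hNa hk (by omega)
    exact absurd hle (hk i (by omega)).lt.not_ge
  · exact h
  · exact absurd h hstop

theorem orb_eq_image_altWalk (hM : IsQSPMOn w M) (hN : IsQSPMOn w N) (ha : a ≤ w)
    (hNa : N a = a) (hstop : altMatching M N k (altWalk M N a k) = altWalk M N a k) :
    orb M N a = altWalk M N a '' Iic k := by
  refine (orb_subset_of_forall (S := altWalk M N a '' Iic k) ⟨0, Nat.zero_le _, rfl⟩ ?_).antisymm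
    (image_subset_iff.2 fun _ _ => altWalk_mem_orb)
  rintro _ ⟨i, hi, rfl⟩
  refine (and_altMatching_iff (n := i) (· (altWalk M N a i) ∈ altWalk M N a '' Iic k)).1
    ⟨?_, ?_⟩
  · rcases (mem_Iic.1 hi).lt_or_eq with hi | rfl
    · exact ⟨i + 1, hi, rfl⟩
    · exact ⟨i, hi, hstop.symm⟩
  · cases i with
    | zero => exact ⟨0, Nat.zero_le _, by simp [altWalk, hNa]⟩
    | succ i => exact ⟨i, by simp at hi ⊢; omega, (altMatching_swap_altWalk_succ hM hN ha).symm⟩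

theorem exists_orb_eq_Icc_isChain_of_apply_right_eq_self
    (hρ : ∀ a b : P, a ⋖ b → ρ b = ρ a + 1) (hfin : (Iic w).Finite) (hM : IsQSPMOn w M)
    (hN : IsQSPMOn w N) (ha : a ≤ w) (hmin : ∀ t ∈ orb M N a, ¬ t < a) (hNa : N a = a) :
    ∃ b, orb M N a = Icc a b ∧ IsChain (· ≤ ·) (orb M N a) ∧ (M b = b ∨ N b = b) := by
  classical
  have hex := exists_not_covBy_succ hfin fun n => altWalk_le hM hN ha (n := n)
  set k := Nat.find hex
  have hk : ∀ i < k, altWalk M N a i ⋖ altWalk M N a (i + 1) :=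
    fun i hi => not_not.1 (Nat.find_min hex hi)
  have hstop := altMatching_altWalk_eq_self hρ hfin hM hN ha hmin hNa hk (Nat.find_spec hex)
  have horb := orb_eq_image_altWalk hM hN ha hNa hstop
  have hmono : MonotoneOn (altWalk M N a) (Iic k) :=
    (strictMonoOn_Iic_of_lt_succ fun i hi => (hk i hi).lt).monotoneOn
  have hMa : a ≤ M a := (hM.apply_eq_self_or_covBy ha
    (hmin _ (apply_left_mem_orb mem_orb_self))).elim ge_of_eq CovBy.le
  refine ⟨altWalk M N a k, subset_antisymm ?_ (Icc_subset_orb hfin hM hN ha hMa hNa.ge ?_ ?_),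
    ?_, ?_⟩
  · rw [horb]
    rintro _ ⟨i, hi, rfl⟩
    exact ⟨hmono (Nat.zero_le k) hi (Nat.zero_le i), hmono hi self_mem_Iic hi⟩
  · rw [horb]
    rintro _ ⟨_ | i, hi, rfl⟩ hat
    · exact absurd hat (lt_irrefl a)
    · refine (covBy_or_of_altMatching_covBy (n := i + 1) ?_).symm
      rw [altMatching_swap_altWalk_succ hM hN ha]
      exact hk i hi
  · exact horb ▸ ⟨k, self_mem_Iic, rfl⟩
  · rw [horb]
    rintro _ ⟨i, hi, rfl⟩ _ ⟨j, hj, rfl⟩ -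
    rcases le_total i j with h | h
    exacts [.inl (hmono hi hj h), .inr (hmono hj hi h)]
  · rcases altMatching_eq_or (M := M) (N := N) (n := k) with h | h <;> rw [h] at hstop
    exacts [.inl hstop, .inr hstop]

theorem exists_orb_eq_Icc_isChain_of_apply_eq_self (hρ : ∀ a b : P, a ⋖ b → ρ b = ρ a + 1)
    (hfin : (Iic w).Finite) (hM : IsQSPMOn w M) (hN : IsQSPMOn w N) (ha : a ≤ w)
    (hmin : ∀ t ∈ orb M N a, ¬ t < a) (hfix : M a = a ∨ N a = a) :
    ∃ b, orb M N a = Icc a b ∧ IsChain (· ≤ ·) (orb M N a) ∧ (M b = b ∨ N b = b) := by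
  rcases hfix with hMa | hNa
  · rw [← orb_comm] at hmin ⊢
    simpa only [or_comm] using
      exists_orb_eq_Icc_isChain_of_apply_right_eq_self hρ hfin hN hM ha hmin hMa
  · exact exists_orb_eq_Icc_isChain_of_apply_right_eq_self hρ hfin hM hN ha hmin hNa

end ChainLike

section Dihedral

variable {α : Type*}

def altLevel (M N : α → α) (a : α) (i : ℕ) : Set α := {altWalk M N a i, altWalk N M a i}

variable {M N : α → α} {a t : α} {i K : ℕ}

theorem altLevel_comm : altLevel N M a i = altLevel M N a i := pair_comm _ _

@[simp] theorem altLevel_zero : altLevel M N a 0 = {a} := by simp [altLevel, altWalk]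

def AltLevelsCovBy [LT α] (M N : α → α) (a : α) (K : ℕ) : Prop :=
  ∀ i ≤ K, ∀ x ∈ altLevel M N a i, ∀ y ∈ altLevel M N a (i + 1), x ⋖ y

variable [PartialOrder α] {ρ : α → ℕ} {w : α}

theorem covBy_altWalk_add_two (hρ : ∀ a b : α, a ⋖ b → ρ b = ρ a + 1) (hfin : (Iic w).Finite)
    (hM : IsQSPMOn w M) (hN : IsQSPMOn w N) (ha : a ≤ w) {n : ℕ}
    (hdc : altWalk N M a n ⋖ altWalk M N a (n + 1))
    (hdd : altWalk N M a n ⋖ altWalk N M a (n + 1))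
    (hne : altWalk M N a (n + 1) ≠ altWalk N M a (n + 1)) :
    altWalk M N a (n + 1) ⋖ altWalk M N a (n + 2) ∧
      altWalk N M a (n + 1) ⋖ altWalk M N a (n + 2) := by
  have hfd : altMatching M N (n + 1) (altWalk N M a n) = altWalk N M a (n + 1) := by
    rw [altMatching_succ]; rfl
  rw [← hfd] at hdd hne ⊢
  exact (altMatching_isQSPMOn hM hN).covBy_apply_of_covBy hρ hfin (altWalk_le hM hN ha) hdd hdc hne

theorem covBy_of_mem_altLevel (hρ : ∀ a b : α, a ⋖ b → ρ b = ρ a + 1) (hfin : (Iic w).Finite)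
    (hM : IsQSPMOn w M) (hN : IsQSPMOn w N) (ha : a ≤ w) (hMa : a ⋖ M a) (hNa : a ⋖ N a) :
    ∀ n, (∀ i ≤ n, 0 < i → altWalk M N a i ≠ altWalk N M a i) →
      ∀ x ∈ altLevel M N a n, ∀ y ∈ altLevel M N a (n + 1), x ⋖ y := by
  intro n
  induction n with
  | zero => simpa [altLevel, altWalk] using ⟨hMa, hNa⟩
  | succ n ih =>
    intro hne
    have h := ih fun i hi => hne i (by omega)
    have hne' := hne (n + 1) le_rfl n.succ_pos
    obtain ⟨h1, h2⟩ := covBy_altWalk_add_two hρ hfin hM hN ha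
      (h _ (.inr rfl) _ (.inl rfl)) (h _ (.inr rfl) _ (.inr rfl)) hne'
    obtain ⟨h3, h4⟩ := covBy_altWalk_add_two hρ hfin hN hM ha
      (h _ (.inl rfl) _ (.inr rfl)) (h _ (.inl rfl) _ (.inl rfl)) hne'.symm
    simp only [altLevel, mem_insert_iff, mem_singleton_iff, forall_eq_or_imp, forall_eq]
    exact ⟨⟨h1, h4⟩, ⟨h2, h3⟩⟩

theorem exists_altWalk_eq (hρ : ∀ a b : α, a ⋖ b → ρ b = ρ a + 1) (hfin : (Iic w).Finite)
    (hM : IsQSPMOn w M) (hN : IsQSPMOn w N) (ha : a ≤ w) (hMa : a ⋖ M a) (hNa : a ⋖ N a) :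
    ∃ n, altWalk M N a (n + 1) = altWalk N M a (n + 1) := by
  by_contra! h
  obtain ⟨n, hn⟩ := exists_not_covBy_succ hfin fun n => altWalk_le hM hN ha (n := n)
  refine hn (covBy_of_mem_altLevel hρ hfin hM hN ha hMa hNa n (fun i _ hi => ?_) _ (.inl rfl) _
    (.inl rfl))
  obtain ⟨j, rfl⟩ := Nat.exists_eq_add_one_of_ne_zero hi.ne'
  exact h j

theorem exists_apply_altWalk_mem_altLevel (hM : IsQSPMOn w M) (hN : IsQSPMOn w N) (ha : a ≤ w)
    (hK : altWalk M N a (K + 1) = altWalk N M a (K + 1)) (hi : i ≤ K + 1) :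
    ∀ f, f = M ∨ f = N → ∃ j ≤ K + 1, j ≠ i ∧ f (altWalk M N a i) ∈ altLevel M N a j := by
  have key := (and_altMatching_iff (M := M) (N := N) (n := i)
    fun f => ∃ j ≤ K + 1, j ≠ i ∧ f (altWalk M N a i) ∈ altLevel M N a j).1 ⟨?_, ?_⟩
  · rintro f (rfl | rfl)
    exacts [key.1, key.2]
  · rcases hi.lt_or_eq with hi | rfl
    · exact ⟨i + 1, hi, by omega, .inl rfl⟩
    · refine ⟨K, by omega, by omega, .inr ?_⟩
      rw [hK, altMatching_swap_altWalk_succ hN hM ha]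
      exact mem_singleton _
  · cases i with
    | zero => exact ⟨1, by omega, by omega, .inr (by simp [altWalk])⟩
    | succ i =>
      exact ⟨i, by omega, by omega, .inl (altMatching_swap_altWalk_succ hM hN ha)⟩

theorem exists_apply_mem_altLevel (hM : IsQSPMOn w M) (hN : IsQSPMOn w N) (ha : a ≤ w)
    (hK : altWalk M N a (K + 1) = altWalk N M a (K + 1)) (hi : i ≤ K + 1)
    (ht : t ∈ altLevel M N a i) (f : α → α) (hf : f = M ∨ f = N) :
    ∃ j ≤ K + 1, j ≠ i ∧ f t ∈ altLevel M N a j := by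
  rcases ht with rfl | rfl
  · exact exists_apply_altWalk_mem_altLevel hM hN ha hK hi f hf
  · simpa only [altLevel_comm] using
      exists_apply_altWalk_mem_altLevel hN hM ha hK.symm hi f hf.symm

theorem orb_eq_setOf_mem_altLevel (hM : IsQSPMOn w M) (hN : IsQSPMOn w N) (ha : a ≤ w)
    (hK : altWalk M N a (K + 1) = altWalk N M a (K + 1)) :
    orb M N a = {t | ∃ i ≤ K + 1, t ∈ altLevel M N a i} := by
  refine (orb_subset_of_forall (S := {t | ∃ i ≤ K + 1, t ∈ altLevel M N a i})
    ⟨0, Nat.zero_le _, by simp⟩ ?_).antisymm ?_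
  · rintro t ⟨i, hi, ht⟩
    obtain ⟨jM, hjM, -, hM'⟩ := exists_apply_mem_altLevel hM hN ha hK hi ht M (.inl rfl)
    obtain ⟨jN, hjN, -, hN'⟩ := exists_apply_mem_altLevel hM hN ha hK hi ht N (.inr rfl)
    exact ⟨⟨jM, hjM, hM'⟩, ⟨jN, hjN, hN'⟩⟩
  · rintro t ⟨i, -, rfl | rfl⟩
    exacts [altWalk_mem_orb, altWalk_swap_mem_orb]

theorem lt_of_mem_altLevel (hrung : AltLevelsCovBy M N a K) {i j : ℕ} (hj : j ≤ K + 1)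
    (hij : i < j) {x y : α} (hx : x ∈ altLevel M N a i) (hy : y ∈ altLevel M N a j) : x < y := by
  induction j generalizing y with
  | zero => omega
  | succ j ih =>
    have hcov := hrung j (by omega) _ (.inl rfl) y hy
    rcases (Nat.lt_succ_iff.1 hij).lt_or_eq with hij | rfl
    · exact (ih (by omega) hij (.inl rfl)).trans hcov.lt
    · exact hrung i (by omega) x hx y hy |>.lt

theorem rank_of_mem_altLevel (hρ : ∀ a b : α, a ⋖ b → ρ b = ρ a + 1)
    (hrung : AltLevelsCovBy M N a K) (hi : i ≤ K + 1)
    (ht : t ∈ altLevel M N a i) : ρ t = ρ a + i := by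
  induction i generalizing t with
  | zero => simp_all
  | succ i ih =>
    rw [hρ _ _ (hrung i (by omega) _ (.inl rfl) t ht), ih (by omega) (.inl rfl), add_assoc]

theorem mem_Icc_of_mem_altLevel (hrung : AltLevelsCovBy M N a K)
    (hK : altWalk M N a (K + 1) = altWalk N M a (K + 1)) (hi : i ≤ K + 1)
    (ht : t ∈ altLevel M N a i) : t ∈ Icc a (altWalk M N a (K + 1)) := by
  constructor
  · rcases Nat.eq_zero_or_pos i with rfl | hi0
    · simp_all
    · exact (lt_of_mem_altLevel hrung hi hi0 (by simp) ht).le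
  · rcases hi.lt_or_eq with hi | rfl
    · exact (lt_of_mem_altLevel hrung le_rfl hi ht (.inl rfl)).le
    · rcases ht with rfl | rfl
      exacts [le_rfl, hK.ge]

theorem apply_ne_self_of_mem_altLevel (hM : IsQSPMOn w M) (hN : IsQSPMOn w N) (ha : a ≤ w)
    (hrung : AltLevelsCovBy M N a K) (hK : altWalk M N a (K + 1) = altWalk N M a (K + 1))
    (hi : i ≤ K + 1) (ht : t ∈ altLevel M N a i) (f : α → α) (hf : f = M ∨ f = N) :
    f t ≠ t := by
  obtain ⟨j, hj, hji, hfj⟩ := exists_apply_mem_altLevel hM hN ha hK hi ht f hf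
  intro hft
  rw [hft] at hfj
  rcases hji.lt_or_gt with hji | hji
  · exact (lt_of_mem_altLevel hrung hi hji hfj ht).false
  · exact (lt_of_mem_altLevel hrung hj hji ht hfj).false

theorem covBy_or_of_mem_altLevel_succ (hM : IsQSPMOn w M) (hN : IsQSPMOn w N) (ha : a ≤ w)
    (hrung : AltLevelsCovBy M N a K) (hi : i ≤ K) (ht : t ∈ altLevel M N a (i + 1)) :
    M t ⋖ t ∨ N t ⋖ t := by
  rcases ht with rfl | rfl
  · refine (covBy_or_of_altMatching_covBy (n := i + 1) ?_).symm
    rw [altMatching_swap_altWalk_succ hM hN ha]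
    exact hrung i hi _ (.inl rfl) _ (.inl rfl)
  · refine covBy_or_of_altMatching_covBy (n := i + 1) ?_
    rw [altMatching_swap_altWalk_succ hN hM ha]
    exact hrung i hi _ (.inr rfl) _ (.inr rfl)

theorem orb_eq_Icc_of_altLevel (hfin : (Iic w).Finite) (hM : IsQSPMOn w M)
    (hN : IsQSPMOn w N) (ha : a ≤ w) (hMa : a ⋖ M a) (hNa : a ⋖ N a)
    (hrung : AltLevelsCovBy M N a K) (hK : altWalk M N a (K + 1) = altWalk N M a (K + 1)) :
    orb M N a = Icc a (altWalk M N a (K + 1)) := by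
  have horb := orb_eq_setOf_mem_altLevel hM hN ha hK
  refine subset_antisymm ?_ (Icc_subset_orb hfin hM hN ha hMa.le hNa.le ?_ altWalk_mem_orb)
  · rw [horb]
    rintro t ⟨i, hi, ht⟩
    exact mem_Icc_of_mem_altLevel hrung hK hi ht
  · rw [horb]
    rintro t ⟨_ | i, hi, ht⟩ hat
    · simp only [altLevel_zero, mem_singleton_iff] at ht
      exact absurd (ht ▸ hat) (lt_irrefl a)
    · exact covBy_or_of_mem_altLevel_succ hM hN ha hrung (by omega) ht

theorem setOf_rank_eq_eq_altLevel (hρ : ∀ a b : α, a ⋖ b → ρ b = ρ a + 1)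
    (hM : IsQSPMOn w M) (hN : IsQSPMOn w N) (ha : a ≤ w)
    (hrung : AltLevelsCovBy M N a K) (hK : altWalk M N a (K + 1) = altWalk N M a (K + 1))
    (hi : i ≤ K + 1) : {t ∈ orb M N a | ρ t = ρ a + i} = altLevel M N a i := by
  rw [orb_eq_setOf_mem_altLevel hM hN ha hK]
  ext t
  refine ⟨fun ⟨⟨j, hj, ht⟩, hρt⟩ => ?_,
    fun ht => ⟨⟨i, hi, ht⟩, rank_of_mem_altLevel hρ hrung hi ht⟩⟩
  rw [rank_of_mem_altLevel hρ hrung hj ht, Nat.add_left_cancel_iff] at hρt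
  exact hρt ▸ ht

theorem exists_orb_eq_Icc_of_covBy_apply (hρ : ∀ a b : α, a ⋖ b → ρ b = ρ a + 1)
    (hfin : (Iic w).Finite) (hM : IsQSPMOn w M) (hN : IsQSPMOn w N) (ha : a ≤ w)
    (hMa : a ⋖ M a) (hNa : a ⋖ N a) :
    ∃ b, orb M N a = Icc a b ∧ (∀ t ∈ orb M N a, M t ≠ t ∧ N t ≠ t) ∧
      (∀ s ∈ orb M N a, ∀ t ∈ orb M N a, ρ s ≠ ρ t → s < t ∨ t < s) ∧
      ∀ k : ℕ, ρ a < k → k < ρ b → {t ∈ orb M N a | ρ t = k}.ncard = 2 := by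
  classical
  have hex := exists_altWalk_eq hρ hfin hM hN ha hMa hNa
  set K := Nat.find hex
  have hK : altWalk M N a (K + 1) = altWalk N M a (K + 1) := Nat.find_spec hex
  have hne : ∀ i ≤ K, 0 < i → altWalk M N a i ≠ altWalk N M a i := by
    intro i hi hi0
    obtain ⟨j, rfl⟩ := Nat.exists_eq_add_one_of_ne_zero hi0.ne'
    exact Nat.find_min hex (by omega)
  have hrung : AltLevelsCovBy M N a K :=
    fun i hi => covBy_of_mem_altLevel hρ hfin hM hN ha hMa hNa i fun j hj => hne j (hj.trans hi)
  have horb := orb_eq_setOf_mem_altLevel hM hN ha hK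
  refine ⟨_, orb_eq_Icc_of_altLevel hfin hM hN ha hMa hNa hrung hK, ?_, ?_, ?_⟩
  · rw [horb]
    rintro t ⟨i, hi, ht⟩
    exact ⟨apply_ne_self_of_mem_altLevel hM hN ha hrung hK hi ht M (.inl rfl),
      apply_ne_self_of_mem_altLevel hM hN ha hrung hK hi ht N (.inr rfl)⟩
  · rw [horb]
    rintro s ⟨i, hi, hs⟩ t ⟨j, hj, ht⟩ hst
    rw [rank_of_mem_altLevel hρ hrung hi hs, rank_of_mem_altLevel hρ hrung hj ht] at hst
    rcases Nat.lt_or_gt_of_ne (Nat.add_left_cancel_iff.not.1 hst) with hij | hij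
    exacts [.inl (lt_of_mem_altLevel hrung hj hij hs ht),
      .inr (lt_of_mem_altLevel hrung hi hij ht hs)]
  · intro k hk hkb
    rw [rank_of_mem_altLevel hρ hrung le_rfl (.inl rfl)] at hkb
    obtain ⟨i, rfl⟩ := Nat.exists_eq_add_of_le hk.le
    rw [setOf_rank_eq_eq_altLevel hρ hM hN ha hrung hK (by omega)]
    exact ncard_pair (hne i (by omega) (by omega))

end Dihedral

theorem orbit_min_max_interval_dichotomy_general {P : Type*} [PartialOrder P]
    (ρ : P → ℕ) (hρcov : ∀ a b : P, a ⋖ b → ρ b = ρ a + 1)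
    (hP : IsPircon P)
    {w : P} {M N : P → P} (hM : IsQSPMOn w M) (hN : IsQSPMOn w N)
    {u₀ : P} (hu₀ : u₀ ≤ w) :
    ∃ a b : P, IsLeast (orb M N u₀) a ∧ IsGreatest (orb M N u₀) b ∧
      orb M N u₀ = Set.Icc a b ∧
      Xor'
        (IsChain (· ≤ ·) (orb M N u₀) ∧ (M a = a ∨ N a = a) ∧ (M b = b ∨ N b = b))
        ((∀ t ∈ orb M N u₀, M t ≠ t ∧ N t ≠ t) ∧
          (∀ s ∈ orb M N u₀, ∀ t ∈ orb M N u₀, ρ s ≠ ρ t → s < t ∨ t < s) ∧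
          ∀ k : ℕ, ρ a < k → k < ρ b → {t ∈ orb M N u₀ | ρ t = k}.ncard = 2) := by
  have hfin := hP.finite_Iic w
  obtain ⟨a, ha⟩ := (hfin.subset (orb_subset_Iic hM hN hu₀)).exists_minimal ⟨u₀, mem_orb_self⟩
  have haw : a ≤ w := orb_subset_Iic hM hN hu₀ ha.prop
  have horb : orb M N a = orb M N u₀ := orb_eq_of_mem hM hN hu₀ ha.prop
  have hmin : ∀ t ∈ orb M N a, ¬ t < a := fun t ht => ha.not_lt (horb ▸ ht)
  have hends : ∀ b, orb M N a = Icc a b → IsLeast (orb M N a) a ∧ IsGreatest (orb M N a) b := by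
    intro b hab
    have hab' : a ≤ b := (hab ▸ mem_orb_self : a ∈ Icc a b).2
    exact hab ▸ ⟨isLeast_Icc hab', isGreatest_Icc hab'⟩
  rw [← horb]
  by_cases hfix : M a = a ∨ N a = a
  · obtain ⟨b, hab, hchain, hb⟩ :=
      exists_orb_eq_Icc_isChain_of_apply_eq_self hρcov hfin hM hN haw hmin hfix
    refine ⟨a, b, (hends b hab).1, (hends b hab).2, hab, .inl ⟨⟨hchain, hfix, hb⟩, fun h => ?_⟩⟩
    have := h.1 a mem_orb_self
    tauto
  · obtain ⟨hMa, hNa⟩ := not_or.1 hfix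
    obtain ⟨b, hab, h⟩ := exists_orb_eq_Icc_of_covBy_apply hρcov hfin hM hN haw
      ((hM.apply_eq_self_or_covBy haw (hmin _ (apply_left_mem_orb mem_orb_self))).resolve_left hMa)
      ((hN.apply_eq_self_or_covBy haw (hmin _ (apply_right_mem_orb mem_orb_self))).resolve_left hNa)
    exact ⟨a, b, (hends b hab).1, (hends b hab).2, hab, .inr ⟨h, fun h' => h'.2.1.elim hMa hNa⟩⟩

/-- Every orbit of `⟨M,N⟩` on `P_{≤w}` has a minimum and a maximum, is an interval of
`P_{≤w}`, and is either chain-like or dihedral (exactly one of the two). -/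
theorem orbit_min_max_interval_dichotomy {P : Type*} [PartialOrder P] [OrderBot P]
    (ρ : P → ℕ) (hρ0 : ρ ⊥ = 0) (hρcov : ∀ a b : P, a ⋖ b → ρ b = ρ a + 1)
    (hP : IsPircon P)
    {w : P} {M N : P → P} (hM : IsQSPMOn w M) (hN : IsQSPMOn w N)
    {u₀ : P} (hu₀ : u₀ ≤ w) :
    ∃ a b : P, IsLeast (orb M N u₀) a ∧ IsGreatest (orb M N u₀) b ∧
      orb M N u₀ = Set.Icc a b ∧
      Xor'
        (IsChain (· ≤ ·) (orb M N u₀) ∧ (M a = a ∨ N a = a) ∧ (M b = b ∨ N b = b))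
        ((∀ t ∈ orb M N u₀, M t ≠ t ∧ N t ≠ t) ∧
          (∀ s ∈ orb M N u₀, ∀ t ∈ orb M N u₀, ρ s ≠ ρ t → s < t ∨ t < s) ∧
          ∀ k : ℕ, ρ a < k → k < ρ b → {t ∈ orb M N u₀ | ρ t = k}.ncard = 2) :=
  orbit_min_max_interval_dichotomy_general ρ hρcov hP hM hN hu₀
end

section
/- Let x ∈ {q,−1} and let (R^x_{u,w}) be the family of Kazhdan–Lusztig R^x-polynomials of a pircon system (P,S), satisfying the up-down symmetry, and consider the x-action of the operators T_M on 𝓜_P. Then for every M ∈ S and every m ∈ 𝓜_P, ι^x(T_M(m)) = q^{−1}·T_M(ι^x(m)) + (q^{−1}−1)·ι^x(m); equivalently, ι^x(h·m) = ι(h)·ι^x(m) for all h in the Hecke algebra of the Coxeter system (W_P,S), where ι denotes its Kazhdan–Lusztig bar involution (which sends T_M to T_M^{−1} = q^{−1}·T_M + (q^{−1}−1)). -/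
open Polynomial LaurentPolynomial

noncomputable section

/-- A quasi special partial matching of a poset `P`: an involution `M : P → P` such that
for every `t`, either `M t ⋖ t`, `M t = t`, or `t ⋖ M t`, and whenever `t ⋖ u` and
`M t ≠ u`, then `M t < M u`. -/
def IsQSPM {P : Type*} [PartialOrder P] (M : P → P) : Prop :=
  Function.Involutive M ∧
  (∀ t : P, M t ⋖ t ∨ M t = t ∨ t ⋖ M t) ∧
  ∀ t u : P, t ⋖ u → M t ≠ u → M t < M u

/-- A pircon system `(P,S)`: `S` is a set of quasi special partial matchings of `P` such
that every `w ≠ ⊥` is matched downwards by some `M ∈ S`. -/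
def IsPirconSystem {P : Type*} [PartialOrder P] [OrderBot P] (S : Set (P → P)) : Prop :=
  (∀ M ∈ S, IsQSPM M) ∧ ∀ w : P, w ≠ ⊥ → ∃ M ∈ S, M w ⋖ w

/-- The defining properties of the family of Kazhdan--Lusztig `R^x`-polynomials of a
pircon system `(P,S)`, where `x ∈ {q,-1} ⊆ ℤ[q]` (here `q` is the variable `X`). -/
def IsKLRFamily {P : Type*} [PartialOrder P] (S : Set (P → P)) (x : Polynomial ℤ)
    (R : P → P → Polynomial ℤ) : Prop :=
  (∀ u w : P, ¬ u ≤ w → R u w = 0) ∧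
  (∀ w : P, R w w = 1) ∧
  ∀ M ∈ S, ∀ u w : P, M w ⋖ w →
    (M u ⋖ u → R u w = R (M u) (M w)) ∧
    (u ⋖ M u → R u w = (X - 1) * R u (M w) + X * R (M u) (M w)) ∧
    (M u = u → R u w = (X - 1 - x) * R u (M w))

/-- The up-down symmetry for a family of Kazhdan--Lusztig `R^x`-polynomials. -/
def UpDownSymmetry {P : Type*} [PartialOrder P] (S : Set (P → P)) (x : Polynomial ℤ)
    (R : P → P → Polynomial ℤ) : Prop :=
  ∀ M ∈ S, ∀ u w : P, u ⋖ M u →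
    (w ⋖ M w → R u w = R (M u) (M w)) ∧
    (M w ⋖ w → R u w = (X - 1) * R (M u) w + X * R (M u) (M w)) ∧
    (M w = w → R u w = (X - 1 - x) * R (M u) w)

/-!  The ring `A = ℤ[q^{1/2}, q^{-1/2}]` is realized as `LaurentPolynomial ℤ`, with
`q^{1/2} = T 1` and hence `q = T 2`; the bar involution `q^{1/2} ↦ q^{-1/2}` is
`LaurentPolynomial.invert`.  The free `A`-module `𝓜_P = ⊕_{u ∈ P} A·m_u` is realized as
the finitely supported elements of `P → A`, the basis element `m_u` corresponding to the
indicator of `u`. -/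

/-- Evaluation of a polynomial in `q` at `q = T 2`, i.e. the inclusion
`ℤ[q] → ℤ[q^{1/2}, q^{-1/2}]`. -/
def evq (p : Polynomial ℤ) : LaurentPolynomial ℤ :=
  Polynomial.aeval (T 2 : LaurentPolynomial ℤ) p

open Classical in
/-- The `y`-action of the operator `T_M` on `𝓜_P`, written in coordinates:
`T_M(m_v) = m_{M v}` if `v ⋖ M v`; `T_M(m_v) = q·m_{M v} + (q-1)·m_v` if `M v ⋖ v`;
and `T_M(m_v) = y·m_v` if `M v = v`. -/
def TMact {P : Type*} [PartialOrder P] (M : P → P) (y : LaurentPolynomial ℤ)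
    (f : P → LaurentPolynomial ℤ) : P → LaurentPolynomial ℤ := fun u =>
  if M u = u then y * f u
  else if M u < u then f (M u) + (T 2 - 1) * f u
  else T 2 * f (M u)

/-- The map `ι^x` on `𝓜_P`, written in coordinates:
`ι^x(Σ_v f_v·m_v) = Σ_v f̄_v·q^{-ρ(v)}·Σ_{u} (-1)^{ρ(u,v)}·R^x_{u,v}(q)·m_u`. -/
def iotaAct {P : Type*} [PartialOrder P] (ρ : P → ℕ) (R : P → P → Polynomial ℤ)
    (f : P → LaurentPolynomial ℤ) : P → LaurentPolynomial ℤ := fun u =>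
  ∑ᶠ v : P, invert (f v) * (T (-2 * (ρ v : ℤ)) * ((-1) ^ (ρ v - ρ u) * evq (R u v)))

/-- The involution `j_P` of `𝓜_P`: `j_P(a·m_w) = ā·(-q^{-1})^{ρ(w)}·m_w`. -/
def jPact {P : Type*} [PartialOrder P] (ρ : P → ℕ) (f : P → LaurentPolynomial ℤ) :
    P → LaurentPolynomial ℤ := fun w => invert (f w) * (-T (-2)) ^ (ρ w)

/-- `deg f < k/2`. -/
def DegLtHalf (f : Polynomial ℤ) (k : ℤ) : Prop :=
  f = 0 ∨ 2 * (f.natDegree : ℤ) < k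

/-- The Kazhdan--Lusztig--Stanley polynomials of the kernel `(R_{u,w})`: `P_{u,w} = 0`
unless `u ≤ w`, `P_{w,w} = 1`, `deg P_{u,w} < ρ(u,w)/2` for `u < w`, and
`q^{ρ(u,w)}·P_{u,w}(q⁻¹) = Σ_{u ≤ t ≤ w} R_{u,t}(q)·P_{t,w}(q)`. -/
def IsKLSFamily {P : Type*} [PartialOrder P] (ρ : P → ℕ)
    (R Pp : P → P → Polynomial ℤ) : Prop :=
  (∀ u w : P, ¬ u ≤ w → Pp u w = 0) ∧
  (∀ w : P, Pp w w = 1) ∧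
  (∀ u w : P, u < w → DegLtHalf (Pp u w) ((ρ w : ℤ) - (ρ u : ℤ))) ∧
  ∀ u w : P, u ≤ w →
    T (2 * ((ρ w : ℤ) - (ρ u : ℤ))) * invert (evq (Pp u w)) =
      ∑ᶠ t ∈ Set.Icc u w, evq (R u t) * evq (Pp t w)

/-- The Kazhdan--Lusztig element `C^x_w ∈ 𝓜_P`, in coordinates: its coefficient on `m_v`
is `q^{ρ(w)/2}·(-1)^{ρ(v,w)}·q^{-ρ(v)}·P^x_{v,w}(q^{-1})`. -/
def Cel {P : Type*} [PartialOrder P] (ρ : P → ℕ) (Pp : P → P → Polynomial ℤ) (w : P) :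
    P → LaurentPolynomial ℤ := fun v =>
  T (ρ w : ℤ) * ((-1) ^ (ρ w - ρ v) * (T (-2 * (ρ v : ℤ)) * invert (evq (Pp v w))))

/-- The Kazhdan--Lusztig element `C'^x_w ∈ 𝓜_P`, in coordinates: its coefficient on
`m_v` is `q^{-ρ(w)/2}·P^z_{v,w}(q)` (the family `Pp` fed here is `P^z`). -/
def Cel' {P : Type*} [PartialOrder P] (ρ : P → ℕ) (Pp : P → P → Polynomial ℤ) (w : P) :
    P → LaurentPolynomial ℤ := fun v =>
  T (-(ρ w : ℤ)) * evq (Pp v w)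


/-!
Write `ι^x(m)(u) = ∑_v m̄_v · c(u,v)`. The operator `T_M` is a diagonal operator plus a diagonal
operator composed with the involution `M`, so its transpose for the pairing `∑_v` is computed by
reindexing along `M`, and the theorem reduces to the identity of coefficients
`c · T̄_Mᵀ = T_M⁻¹ · c`, where `T_M⁻¹ = q⁻¹T_M + q⁻¹ - 1`. This is checked according to whether `M`
moves `u` and `v` up, down, or fixes them: each case is one instance of the defining recursion of
`R^x` or of the up-down symmetry, together with `q q⁻¹ = 1` and, when `M` fixes `u` or `v`, the
relations `x² = (q - 1)x + q` and `x̄ = x⁻¹` satisfied by `x ∈ {q, -1}`.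
-/

open Function

theorem IsPircon.isStronglyCoatomic {P : Type*} [PartialOrder P] (hP : IsPircon P) :
    IsStronglyCoatomic P where
  exists_le_covBy_of_lt u v huv := by
    have hfin : (Set.Ico u v).Finite :=
      (hP v fun hv => huv.not_ge (hv huv.le)).1.subset fun z hz => hz.2.le
    obtain ⟨z, hz⟩ := hfin.exists_maximal ⟨u, le_rfl, huv⟩
    exact ⟨z, hz.prop.1, hz.prop.2, fun w hzw hwv =>
      hzw.not_ge (hz.le_of_ge ⟨hz.prop.1.trans hzw.le, hwv⟩ hzw.le)⟩

theorem monotone_of_covBy_eq_add_one {P : Type*} [PartialOrder P] [IsStronglyCoatomic P]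
    {ρ : P → ℕ} (hρ : ∀ a b : P, a ⋖ b → ρ b = ρ a + 1) : Monotone ρ := by
  suffices ∀ n, ∀ u v : P, ρ v = n → u ≤ v → ρ u ≤ n from fun u v huv => this _ u v rfl huv
  intro n
  induction n using Nat.strong_induction_on with
  | _ n ih =>
    intro u v hv huv
    rcases huv.eq_or_lt with rfl | hlt
    · exact hv.le
    obtain ⟨z, huz, hzv⟩ := exists_le_covBy_of_lt hlt
    have hz := hρ z v hzv
    exact (ih (ρ z) (by omega) u z rfl huz).trans (by omega)

theorem neg_one_pow_tsub {R : Type*} [Monoid R] [HasDistribNeg R] {a b : ℕ} (h : b ≤ a) :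
    (-1 : R) ^ (a - b) = (-1) ^ a * (-1) ^ b := by
  conv_rhs => rw [← Nat.sub_add_cancel h, pow_add, mul_assoc, ← pow_add, ← two_mul, pow_mul]
  simp

theorem finsum_mul_add_mul {P A : Type*} [CommSemiring A] {g : P → A}
    (hg : HasFiniteSupport g) (a b : A) (c d : P → A) :
    ∑ᶠ v, g v * (a * c v + b * d v) = a * ∑ᶠ v, g v * c v + b * ∑ᶠ v, g v * d v := by
  rw [mul_finsum' _ _ (by fun_prop), mul_finsum' _ _ (by fun_prop),
    ← finsum_add_distrib (by fun_prop) (by fun_prop)]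
  exact finsum_congr fun v => by ring

theorem Function.Involutive.finsum_adjoint {P A : Type*} [CommSemiring A] {M : P → P}
    (hM : Involutive M) {g : P → A} (hg : HasFiniteSupport g) (α β c : P → A) :
    ∑ᶠ v, (α v * g v + β v * g (M v)) * c v =
      ∑ᶠ v, g v * (α v * c v + β (M v) * c (M v)) := by
  have hgM : HasFiniteSupport (fun v => g (M v)) := hg.fun_comp_of_injective hM.injective
  have hswap : ∑ᶠ v, β v * g (M v) * c v = ∑ᶠ v, g v * (β (M v) * c (M v)) := by
    rw [← finsum_comp_equiv hM.toPerm]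
    exact finsum_congr fun v => by simp only [coe_toPerm, hM v]; ring
  simp only [add_mul, mul_add]
  rw [finsum_add_distrib (by fun_prop) ((hgM.fun_mul_right β).fun_mul_left c), hswap,
    finsum_add_distrib (by fun_prop) (by fun_prop)]
  exact congrArg (· + _) (finsum_congr fun v => by ring)

section Hecke

variable {P : Type*} [PartialOrder P]

open Classical in
def TMdiag (M : P → P) (y : LaurentPolynomial ℤ) (v : P) : LaurentPolynomial ℤ :=
  if M v = v then y else if M v < v then T 2 - 1 else 0

open Classical in
def TMoff (M : P → P) (v : P) : LaurentPolynomial ℤ :=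
  if M v = v then 0 else if M v < v then 1 else T 2

theorem TMact_apply (M : P → P) (y : LaurentPolynomial ℤ) (f : P → LaurentPolynomial ℤ)
    (v : P) : TMact M y f v = TMdiag M y v * f v + TMoff M v * f (M v) := by
  unfold TMact TMdiag TMoff
  split_ifs <;> ring

theorem TMact_finsum (M : P → P) (y : LaurentPolynomial ℤ) {g : P → LaurentPolynomial ℤ}
    (hg : HasFiniteSupport g) (c : P → P → LaurentPolynomial ℤ) (u : P) :
    TMact M y (fun w => ∑ᶠ v, g v * c w v) u = ∑ᶠ v, g v * TMact M y (fun w => c w v) u := by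
  simp only [TMact_apply, finsum_mul_add_mul hg]

/-- The coefficient of `m_u` in `ι^x(m_v)`, with the sign `(-1)^{ρ(u,v)}` split as
`(-1)^{ρ u} (-1)^{ρ v}`. This avoids the truncated subtraction `ρ v - ρ u` of `iotaAct`, and
agrees with it whenever `R u v ≠ 0`. -/
def iotaCoeff (ρ : P → ℕ) (R : P → P → ℤ[X]) (u v : P) : LaurentPolynomial ℤ :=
  (-1) ^ ρ u * (-T (-2)) ^ ρ v * evq (R u v)

theorem iotaAct_eq_finsum {ρ : P → ℕ} (hρ : Monotone ρ) {R : P → P → ℤ[X]}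
    (hR : ∀ u w : P, ¬ u ≤ w → R u w = 0) (f : P → LaurentPolynomial ℤ) :
    iotaAct ρ R f = fun u => ∑ᶠ v, invert (f v) * iotaCoeff ρ R u v := by
  funext u
  refine finsum_congr fun v => ?_
  by_cases huv : u ≤ v
  · have hT : (T (-2 * (ρ v : ℤ)) : LaurentPolynomial ℤ) = T (-2) ^ ρ v := by
      rw [T_pow, mul_comm]
    rw [iotaCoeff, neg_pow, hT, neg_one_pow_tsub (hρ huv)]
    ring
  · simp [iotaCoeff, hR u v huv, evq]

theorem T_two_mul_T_neg_two : (T 2 : LaurentPolynomial ℤ) * T (-2) = 1 := by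
  rw [← T_add, add_neg_cancel, T_zero]

theorem evq_add (p r : ℤ[X]) : evq (p + r) = evq p + evq r := map_add _ _ _
theorem evq_sub (p r : ℤ[X]) : evq (p - r) = evq p - evq r := map_sub _ _ _
theorem evq_mul (p r : ℤ[X]) : evq (p * r) = evq p * evq r := map_mul _ _ _
theorem evq_one : evq 1 = 1 := map_one _
theorem evq_X : evq X = T 2 := aeval_X _

theorem invert_evq {x : ℤ[X]} (hx : x = X ∨ x = -1) :
    invert (evq x) = T (-2) * evq x + (T (-2) - 1) := by
  rcases hx with rfl | rfl
  · rw [evq_X, invert_T]; linear_combination -T_two_mul_T_neg_two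
  · simp only [evq, map_one, map_neg, mul_neg, mul_one]
    ring

theorem evq_mul_T_two_sub_one_sub {x : ℤ[X]} (hx : x = X ∨ x = -1) :
    evq x * (T 2 - 1 - evq x) = -T 2 := by
  rcases hx with rfl | rfl
  · rw [evq_X]; ring
  · simp [evq]

end Hecke

section Kernel

variable {P : Type*} [PartialOrder P] {ρ : P → ℕ} {S : Set (P → P)} {x : ℤ[X]}
  {R : P → P → ℤ[X]} {M : P → P}

theorem iotaCoeff_transpose_of_apply_eq (hρ : ∀ a b : P, a ⋖ b → ρ b = ρ a + 1)
    (hx : x = X ∨ x = -1) (hR : IsKLRFamily S x R) (hM : M ∈ S) (hMq : IsQSPM M)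
    {u : P} (hu : M u = u) (v : P) :
    invert (TMdiag M (evq x) v) * iotaCoeff ρ R u v
        + invert (TMoff M (M v)) * iotaCoeff ρ R u (M v) =
      T (-2) * TMact M (evq x) (fun w => iotaCoeff ρ R w v) u
        + (T (-2) - 1) * iotaCoeff ρ R u v := by
  classical
  obtain ⟨hinv, htri, -⟩ := hMq
  have hq := T_two_mul_T_neg_two
  have hMMv : M (M v) = v := hinv v
  simp only [TMact, if_pos hu]
  rw [iotaCoeff, iotaCoeff]
  rcases htri v with hv | hv | hv
  · simp only [TMdiag, TMoff, hMMv, if_neg hv.lt.ne, if_pos hv.lt, if_neg hv.lt.ne',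
      if_neg hv.lt.asymm, map_sub, map_one, invert_T]
    rw [hρ _ _ hv, pow_succ, (hR.2.2 M hM u v hv).2.2 hu]
    simp only [evq_mul, evq_sub, evq_X, evq_one]
    linear_combination (T (-2) ^ 2 * ((-1) ^ ρ u * (-T (-2)) ^ ρ (M v) * evq (R u (M v))))
        * evq_mul_T_two_sub_one_sub hx
      - T (-2) * ((-1) ^ ρ u * (-T (-2)) ^ ρ (M v) * evq (R u (M v))) * hq
  · simp only [TMdiag, TMoff, hv, if_pos, map_zero, zero_mul, add_zero, invert_evq hx]
    ring
  · simp only [TMdiag, TMoff, hMMv, if_neg hv.lt.ne', if_neg hv.lt.asymm, if_neg hv.lt.ne,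
      if_pos hv.lt, map_zero, map_one, zero_mul, zero_add, one_mul]
    have h := (hR.2.2 M hM u (M v) (by rwa [hMMv])).2.2 hu
    rw [hMMv] at h
    rw [hρ _ _ hv, pow_succ, h]
    simp only [evq_mul, evq_sub, evq_X, evq_one]
    linear_combination -((-1) ^ ρ u * (-T (-2)) ^ ρ v * evq (R u v)) * hq

theorem iotaCoeff_transpose_of_apply_covBy (hρ : ∀ a b : P, a ⋖ b → ρ b = ρ a + 1)
    (hx : x = X ∨ x = -1) (hud : UpDownSymmetry S x R) (hM : M ∈ S) (hMq : IsQSPM M)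
    {u : P} (hu : M u ⋖ u) (v : P) :
    invert (TMdiag M (evq x) v) * iotaCoeff ρ R u v
        + invert (TMoff M (M v)) * iotaCoeff ρ R u (M v) =
      T (-2) * TMact M (evq x) (fun w => iotaCoeff ρ R w v) u
        + (T (-2) - 1) * iotaCoeff ρ R u v := by
  classical
  obtain ⟨hinv, htri, -⟩ := hMq
  have hq := T_two_mul_T_neg_two
  have hMMu : M (M u) = u := hinv u
  have hMMv : M (M v) = v := hinv v
  have hud' := hud M hM (M u) v (by rwa [hMMu])
  rw [hMMu] at hud'
  simp only [TMact, if_neg hu.lt.ne, if_pos hu.lt]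
  rw [iotaCoeff, iotaCoeff, iotaCoeff, hρ _ _ hu, pow_succ]
  rcases htri v with hv | hv | hv
  · simp only [TMdiag, TMoff, hMMv, if_neg hv.lt.ne, if_pos hv.lt, if_neg hv.lt.ne',
      if_neg hv.lt.asymm, map_sub, map_one, invert_T]
    rw [hρ _ _ hv, pow_succ, hud'.2.1 hv]
    simp only [evq_add, evq_mul, evq_sub, evq_X, evq_one]
    linear_combination
      (T (-2) * ((-1) ^ ρ (M u) * (-T (-2)) ^ ρ (M v) * evq (R u (M v)))) * hq
  · simp only [TMdiag, TMoff, hv, if_pos, map_zero, zero_mul, add_zero, invert_evq hx]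
    rw [hud'.2.2 hv]
    simp only [evq_mul, evq_sub, evq_X, evq_one]
    ring
  · simp only [TMdiag, TMoff, hMMv, if_neg hv.lt.ne', if_neg hv.lt.asymm, if_neg hv.lt.ne,
      if_pos hv.lt, map_zero, map_one, zero_mul, zero_add, one_mul]
    rw [hρ _ _ hv, pow_succ, hud'.1 hv]
    linear_combination ((-1) ^ ρ (M u) * (-T (-2)) ^ ρ v * evq (R u v)) * hq

theorem iotaCoeff_transpose_of_covBy_apply (hρ : ∀ a b : P, a ⋖ b → ρ b = ρ a + 1)
    (hx : x = X ∨ x = -1) (hR : IsKLRFamily S x R) (hud : UpDownSymmetry S x R) (hM : M ∈ S)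
    (hMq : IsQSPM M) {u : P} (hu : u ⋖ M u) (v : P) :
    invert (TMdiag M (evq x) v) * iotaCoeff ρ R u v
        + invert (TMoff M (M v)) * iotaCoeff ρ R u (M v) =
      T (-2) * TMact M (evq x) (fun w => iotaCoeff ρ R w v) u
        + (T (-2) - 1) * iotaCoeff ρ R u v := by
  classical
  obtain ⟨hinv, htri, -⟩ := hMq
  have hq := T_two_mul_T_neg_two
  have hMMv : M (M v) = v := hinv v
  simp only [TMact, if_neg hu.lt.ne', if_neg hu.lt.asymm]
  rw [iotaCoeff, iotaCoeff, iotaCoeff, hρ _ _ hu, pow_succ]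
  rcases htri v with hv | hv | hv
  · simp only [TMdiag, TMoff, hMMv, if_neg hv.lt.ne, if_pos hv.lt, if_neg hv.lt.ne',
      if_neg hv.lt.asymm, map_sub, map_one, invert_T]
    have h := (hud M hM u (M v) hu).1 (by rwa [hMMv])
    rw [hMMv] at h
    rw [hρ _ _ hv, pow_succ, h]
    linear_combination -(T (-2) * ((-1) ^ ρ u * (-T (-2)) ^ ρ (M v) * evq (R (M u) v))) * hq
  · simp only [TMdiag, TMoff, hv, if_pos, map_zero, zero_mul, add_zero, invert_evq hx]
    rw [(hud M hM u v hu).2.2 hv]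
    simp only [evq_mul, evq_sub, evq_X, evq_one]
    linear_combination (T (-2) * ((-1) ^ ρ u * (-T (-2)) ^ ρ v * evq (R (M u) v)))
      * evq_mul_T_two_sub_one_sub hx
  · simp only [TMdiag, TMoff, hMMv, if_neg hv.lt.ne', if_neg hv.lt.asymm, if_neg hv.lt.ne,
      if_pos hv.lt, map_zero, map_one, zero_mul, zero_add, one_mul]
    have h := (hR.2.2 M hM u (M v) (by rwa [hMMv])).2.1 hu
    rw [hMMv] at h
    rw [hρ _ _ hv, pow_succ, h]
    simp only [evq_add, evq_mul, evq_sub, evq_X, evq_one]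
    linear_combination -((-1) ^ ρ u * (-T (-2)) ^ ρ v * evq (R u v)) * hq

theorem iotaCoeff_transpose (hρ : ∀ a b : P, a ⋖ b → ρ b = ρ a + 1)
    (hx : x = X ∨ x = -1) (hR : IsKLRFamily S x R) (hud : UpDownSymmetry S x R) (hM : M ∈ S)
    (hMq : IsQSPM M) (u v : P) :
    invert (TMdiag M (evq x) v) * iotaCoeff ρ R u v
        + invert (TMoff M (M v)) * iotaCoeff ρ R u (M v) =
      T (-2) * TMact M (evq x) (fun w => iotaCoeff ρ R w v) u
        + (T (-2) - 1) * iotaCoeff ρ R u v := by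
  rcases hMq.2.1 u with hu | hu | hu
  · exact iotaCoeff_transpose_of_apply_covBy hρ hx hud hM hMq hu v
  · exact iotaCoeff_transpose_of_apply_eq hρ hx hR hM hMq hu v
  · exact iotaCoeff_transpose_of_covBy_apply hρ hx hR hud hM hMq hu v

end Kernel

theorem iota_TM_twisted_general {P : Type*} [PartialOrder P] [OrderBot P]
    (ρ : P → ℕ) (hρcov : ∀ a b : P, a ⋖ b → ρ b = ρ a + 1)
    (hP : IsPircon P) {S : Set (P → P)} (hS : IsPirconSystem S)
    {x : Polynomial ℤ} (hx : x = X ∨ x = -1)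
    {R : P → P → Polynomial ℤ} (hR : IsKLRFamily S x R)
    (hud : UpDownSymmetry S x R)
    {M : P → P} (hM : M ∈ S)
    (m : P → LaurentPolynomial ℤ) (hm : (Function.support m).Finite) :
    iotaAct ρ R (TMact M (evq x) m) =
      fun u => T (-2) * TMact M (evq x) (iotaAct ρ R m) u
        + (T (-2) - 1) * iotaAct ρ R m u := by
  have hMq := hS.1 M hM
  have := hP.isStronglyCoatomic
  have hρ : Monotone ρ := monotone_of_covBy_eq_add_one hρcov
  have hg : HasFiniteSupport fun v => invert (m v) :=
    HasFiniteSupport.fun_comp hm (map_zero invert)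
  simp only [iotaAct_eq_finsum hρ hR.1]
  funext u
  calc ∑ᶠ v, invert (TMact M (evq x) m v) * iotaCoeff ρ R u v
      = ∑ᶠ v, invert (m v) * (invert (TMdiag M (evq x) v) * iotaCoeff ρ R u v
          + invert (TMoff M (M v)) * iotaCoeff ρ R u (M v)) := by
        simp only [TMact_apply, map_add, map_mul]
        exact hMq.1.finsum_adjoint hg _ _ _
    _ = ∑ᶠ v, invert (m v) * (T (-2) * TMact M (evq x) (fun w => iotaCoeff ρ R w v) u
          + (T (-2) - 1) * iotaCoeff ρ R u v) := by
        simp only [iotaCoeff_transpose hρcov hx hR hud hM hMq]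
    _ = _ := by rw [finsum_mul_add_mul hg, TMact_finsum _ _ hg]

/-- `ι^x` is `ι`-twisted equivariant for the `x`-action: for every `M ∈ S`,
`ι^x(T_M(m)) = q^{-1}·T_M(ι^x(m)) + (q^{-1}-1)·ι^x(m)`, i.e.
`ι^x(h · m) = ι(h) · ι^x(m)` on the Hecke algebra generators (`ι(T_M) = T_M^{-1} =
q^{-1}·T_M + (q^{-1}-1)`). -/
theorem iota_TM_twisted {P : Type*} [PartialOrder P] [OrderBot P]
    (ρ : P → ℕ) (hρ0 : ρ (⊥ : P) = 0) (hρcov : ∀ a b : P, a ⋖ b → ρ b = ρ a + 1)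
    (hP : IsPircon P) {S : Set (P → P)} (hS : IsPirconSystem S)
    {x : Polynomial ℤ} (hx : x = X ∨ x = -1)
    {R : P → P → Polynomial ℤ} (hR : IsKLRFamily S x R)
    (hud : UpDownSymmetry S x R)
    {M : P → P} (hM : M ∈ S)
    (m : P → LaurentPolynomial ℤ) (hm : (Function.support m).Finite) :
    iotaAct ρ R (TMact M (evq x) m) =
      fun u => T (-2) * TMact M (evq x) (iotaAct ρ R m) u
        + (T (-2) - 1) * iotaAct ρ R m u :=
  iota_TM_twisted_general ρ hρcov hP hS hx hR hud hM m hm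

end
end

section
/- Let P be a connected pircon, S a set of quasi special partial matchings of P, and {x,z} = {q,−1}. Denote by ⋅_x and ⋅_z the x-action and the z-action of the operators T_M on 𝓜_P. Then j_P(T_M ⋅_x m) = −q^{−1}·(T_M ⋅_z j_P(m)) for every M ∈ S and every m ∈ 𝓜_P; equivalently, j_P(h ⋅_x m) = j_𝓗(h) ⋅_z j_P(m) for all h in the Hecke algebra of (W_P,S), where j_𝓗 is the Kazhdan–Lusztig involution sending a·T_w to ā·(−q^{−1})^{ℓ(w)}·T_w. -/
open Polynomial LaurentPolynomial

noncomputable section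

/-- `j_P` intertwines the `x`-action and the `z`-action, `{x,z} = {q,-1}`: for every
`M ∈ S`, `j_P(T_M ⋅_x m) = -q^{-1}·(T_M ⋅_z j_P(m))`; equivalently
`j_P(h ⋅_x m) = j_𝓗(h) ⋅_z j_P(m)` on the Hecke algebra generators, `j_𝓗` being the
Kazhdan--Lusztig involution `a·T_w ↦ ā·(-q^{-1})^{ℓ(w)}·T_w`. -/
theorem jP_twisted_equivariance {P : Type*} [PartialOrder P] [OrderBot P]
    (ρ : P → ℕ) (hρ0 : ρ (⊥ : P) = 0) (hρcov : ∀ a b : P, a ⋖ b → ρ b = ρ a + 1)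
    (hP : IsPircon P) {S : Set (P → P)} (hSq : ∀ M ∈ S, IsQSPM M)
    {x z : LaurentPolynomial ℤ}
    (hxz : (x = T 2 ∧ z = -1) ∨ (x = -1 ∧ z = T 2))
    {M : P → P} (hM : M ∈ S) (m : P → LaurentPolynomial ℤ) :
    jPact ρ (TMact M x m) = fun u => -T (-2) * TMact M z (jPact ρ m) u := by
  have h1 : (T (-2) : LaurentPolynomial ℤ) * T 2 = 1 := by rw [← T_add]; norm_num
  funext u
  rcases (hSq M hM).2.1 u with hcov | heq | hcov
  · have hlt : M u < u := hcov.lt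
    have hne : M u ≠ u := hlt.ne
    have hρ : ρ u = ρ (M u) + 1 := hρcov _ _ hcov
    simp only [jPact, TMact, if_neg hne, if_pos hlt, hρ, pow_succ]
    rw [map_add, map_mul, map_sub, map_one, invert_T]
    linear_combination (-(T (-2) * (-T (-2 : ℤ)) ^ ρ (M u) * invert (m u))) * h1
  · simp only [jPact, TMact, if_pos heq]
    rw [map_mul]
    rcases hxz with ⟨hx, hz⟩ | ⟨hx, hz⟩ <;> subst hx <;> subst hz
    · rw [invert_T]; ring
    · rw [map_neg, map_one]
      linear_combination (invert (m u) * (-T (-2 : ℤ)) ^ ρ u) * h1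
  · have hlt : u < M u := hcov.lt
    have hne : M u ≠ u := hlt.ne'
    have hnlt : ¬ M u < u := asymm hlt
    have hρ : ρ (M u) = ρ u + 1 := hρcov _ _ hcov
    simp only [jPact, TMact, if_neg hne, if_neg hnlt, hρ, pow_succ]
    rw [map_mul, invert_T]
    linear_combination (-(T (-2) * invert (m (M u)) * (-T (-2 : ℤ)) ^ ρ u)) * h1

end
end
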